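/- arXiv:1108.6133 — 4 statements merged into one kernel-verified Lean document; each statement's English description precedes it below -/
import Mathlib

section
/- For every real number ρ with 1 < ρ ≤ 2, one has κ^c_ρ(1) = 2√ρ/(1+ρ). -/
/-!
For k = 1 the objective is max(√(4ρ/((1+ρ)²√(1−a²))), 2ρ/((1+ρ)√(2+2a))) over a ∈ [0,1).
The first term is at least its value 2√ρ/(1+ρ) at a = 0, and at a = 0 the second term
2ρ/((1+ρ)√2) is at most 2√ρ/(1+ρ) exactly when √ρ ≤ √2. So for ρ ≤ 2 the infimum is
attained at a = 0.
-/

open MeasureTheory Filter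

/-- `rIdx ρ k i` is r_i for i ∈ {2, …, k+1}: r_i = 2 for 2 ≤ i ≤ k and r_{k+1} = 1+ρ. -/
noncomputable def rIdx (ρ : ℝ) (k i : ℕ) : ℝ := if i = k + 1 then 1 + ρ else 2

/-- `dSeq ρ k a j` is d_{j+1}: d_1 = 1+ρ and
d_{j+2} = √(d_{j+1}² + 2 r_{j+2} a_{j+2} d_{j+1} + r_{j+2}²), where `a ⟨j, _⟩` encodes a_{j+2}. -/
noncomputable def dSeq (ρ : ℝ) (k : ℕ) (a : Fin k → ℝ) : ℕ → ℝ
  | 0 => 1 + ρ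
  | j + 1 =>
      Real.sqrt (dSeq ρ k a j ^ 2
        + 2 * rIdx ρ k (j + 2) * (if h : j < k then a ⟨j, h⟩ else 0) * dSeq ρ k a j
        + rIdx ρ k (j + 2) ^ 2)

/-- D(a_2,…,a_{k+1}) = d_{k+1}. -/
noncomputable def Dfun (ρ : ℝ) (k : ℕ) (a : Fin k → ℝ) : ℝ := dSeq ρ k a k

/-- κ^c_ρ(k): the infimum over (a_2,…,a_{k+1}) ∈ [0,1)^k of
max( (4ρ/((1+ρ)² ∏ √(1−a_i²)))^{1/(k+1)} , 2ρ/D(a_2,…,a_{k+1}) ). -/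
noncomputable def kappaCk (ρ : ℝ) (k : ℕ) : ℝ :=
  sInf ((fun a : Fin k → ℝ =>
      max ((4 * ρ / ((1 + ρ) ^ 2 * ∏ i, Real.sqrt (1 - a i ^ 2))) ^ ((1 : ℝ) / ((k : ℝ) + 1)))
        (2 * ρ / Dfun ρ k a)) '' {a | ∀ i, 0 ≤ a i ∧ a i < 1})

/-- κ^c_ρ = inf_{k ≥ 1} κ^c_ρ(k). -/
noncomputable def kappaC (ρ : ℝ) : ℝ := sInf {x | ∃ k : ℕ, 1 ≤ k ∧ x = kappaCk ρ k}

open Real Set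

noncomputable def kappaOneObjective (ρ a : ℝ) : ℝ :=
  max √(4 * ρ / ((1 + ρ) ^ 2 * √(1 - a ^ 2))) (2 * ρ / ((1 + ρ) * √(2 + 2 * a)))

theorem Dfun_one {ρ : ℝ} (hρ : -1 ≤ ρ) (a : Fin 1 → ℝ) :
    Dfun ρ 1 a = (1 + ρ) * √(2 + 2 * a 0) := by
  have h : (1 + ρ) ^ 2 + 2 * (1 + ρ) * a 0 * (1 + ρ) + (1 + ρ) ^ 2
      = (1 + ρ) ^ 2 * (2 + 2 * a 0) := by ring
  simp only [Dfun, dSeq, rIdx]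
  norm_num
  rw [h, sqrt_mul (sq_nonneg _), sqrt_sq (by linarith)]

theorem kappaCk_one_eq {ρ : ℝ} (hρ : -1 ≤ ρ) :
    kappaCk ρ 1 = sInf (kappaOneObjective ρ '' Ico 0 1) := by
  have hcube : {a : Fin 1 → ℝ | ∀ i, 0 ≤ a i ∧ a i < 1} = (fun x _ ↦ x) '' Ico 0 1 := by
    ext a
    refine ⟨fun ha ↦ ⟨a 0, ha 0, funext fun i ↦ by rw [Fin.fin_one_eq_zero i]⟩, ?_⟩
    rintro ⟨x, hx, rfl⟩ _
    exact hx
  rw [kappaCk, hcube, image_image]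
  congr 1
  refine image_congr fun x _ ↦ ?_
  simp only [kappaOneObjective, Dfun_one hρ, Fin.prod_univ_one, sqrt_eq_rpow]
  norm_num

theorem sqrt_four_mul_div_sq {ρ : ℝ} (hρ : 0 ≤ ρ) :
    √(4 * ρ / (1 + ρ) ^ 2) = 2 * √ρ / (1 + ρ) := by
  rw [sqrt_div' _ (sq_nonneg _), sqrt_sq (by linarith), sqrt_mul' _ hρ,
    show (4 : ℝ) = 2 ^ 2 by norm_num, sqrt_sq zero_le_two]

theorem two_sqrt_div_le_kappaOneObjective {ρ a : ℝ} (hρ : 0 ≤ ρ) (ha : a ∈ Ico 0 1) :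
    2 * √ρ / (1 + ρ) ≤ kappaOneObjective ρ a := by
  obtain ⟨ha0, ha1⟩ := ha
  have hs : 0 < √(1 - a ^ 2) := sqrt_pos.mpr (by nlinarith)
  have hs1 : √(1 - a ^ 2) ≤ 1 := sqrt_le_one.mpr (by nlinarith)
  refine le_max_of_le_left ?_
  rw [← sqrt_four_mul_div_sq hρ]
  gcongr
  exact mul_le_of_le_one_right (by positivity) hs1

theorem kappaOneObjective_zero {ρ : ℝ} (hρ : 0 ≤ ρ) (hρ2 : ρ ≤ 2) :
    kappaOneObjective ρ 0 = 2 * √ρ / (1 + ρ) := by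
  have hsq : √ρ * √ρ ≤ √2 * √ρ := by gcongr
  rw [mul_self_sqrt hρ] at hsq
  have hsecond : 2 * ρ / ((1 + ρ) * √2) ≤ 2 * √ρ / (1 + ρ) := by
    rw [div_le_div_iff₀ (by positivity) (by positivity)]
    nlinarith
  simpa [kappaOneObjective, sqrt_four_mul_div_sq hρ] using hsecond

/-- For every real number ρ with 1 < ρ ≤ 2, one has κ^c_ρ(1) = 2√ρ/(1+ρ). -/
theorem kappaCk_one_eq_of_le_two (ρ : ℝ) (hρ : 1 < ρ) (hρ2 : ρ ≤ 2) :
    kappaCk ρ 1 = 2 * Real.sqrt ρ / (1 + ρ) := by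
  rw [kappaCk_one_eq (by linarith)]
  refine IsLeast.csInf_eq ⟨⟨0, ⟨le_rfl, one_pos⟩, kappaOneObjective_zero (by linarith) hρ2⟩, ?_⟩
  rintro _ ⟨a, ha, rfl⟩
  exact two_sqrt_div_le_kappaOneObjective (by linarith) ha
end

section
/- For every real number ρ > 1 and every integer k ≥ 1, one has κ^c_ρ(k) ≥ (4ρ/(1+ρ)²)^{1/(k+1)}; consequently κ^c_ρ = inf_{k ≥ 1} κ^c_ρ(k) ≥ 2√ρ/(1+ρ) > 0. -/
/-!
Only the first entry of the maximum is needed. Each factor `√(1 - aᵢ²)` lies in `(0, 1]`, so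
dropping the product from the denominator can only decrease `4ρ / ((1+ρ)² ∏ √(1 - aᵢ²))`,
which gives `κ^c_ρ(k) ≥ (4ρ/(1+ρ)²)^{1/(k+1)}`. By AM-GM the base `4ρ/(1+ρ)²` is at most `1`,
so its powers decrease in the exponent; as `1/(k+1) ≤ 1/2` for `k ≥ 1`, every `κ^c_ρ(k)` is at
least `(4ρ/(1+ρ)²)^{1/2} = 2√ρ/(1+ρ)`.
-/

open MeasureTheory Filter

lemma four_mul_div_one_add_sq_le_one (ρ : ℝ) : 4 * ρ / (1 + ρ) ^ 2 ≤ 1 :=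
  div_le_one_of_le₀ (by nlinarith [sq_nonneg (1 - ρ)]) (sq_nonneg _)

lemma two_mul_sqrt_div_one_add_eq_rpow {ρ : ℝ} (hρ : 0 ≤ ρ) :
    2 * Real.sqrt ρ / (1 + ρ) = (4 * ρ / (1 + ρ) ^ 2) ^ ((1 : ℝ) / 2) := by
  rw [← Real.sqrt_eq_rpow, Real.sqrt_div' _ (by positivity), Real.sqrt_sq (by linarith),
    Real.sqrt_mul' _ hρ, show (4 : ℝ) = 2 ^ 2 by norm_num, Real.sqrt_sq zero_le_two]

section Product

variable {ι : Type*} [Fintype ι] {a : ι → ℝ}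

lemma prod_sqrt_one_sub_sq_pos (ha : ∀ i, |a i| < 1) : 0 < ∏ i, Real.sqrt (1 - a i ^ 2) :=
  Finset.prod_pos fun i _ => Real.sqrt_pos.mpr (sub_pos.mpr ((sq_lt_one_iff_abs_lt_one _).mpr (ha i)))

lemma prod_sqrt_one_sub_sq_le_one : ∏ i, Real.sqrt (1 - a i ^ 2) ≤ 1 :=
  Finset.prod_le_one (fun _ _ => Real.sqrt_nonneg _)
    fun i _ => Real.sqrt_le_one.mpr (by nlinarith [sq_nonneg (a i)])

end Product

lemma rpow_le_kappaCk {ρ : ℝ} (hρ : 0 ≤ ρ) (k : ℕ) :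
    (4 * ρ / (1 + ρ) ^ 2) ^ ((1 : ℝ) / ((k : ℝ) + 1)) ≤ kappaCk ρ k := by
  refine le_csInf ⟨_, fun _ => 0, fun _ => ⟨le_rfl, one_pos⟩, rfl⟩ ?_
  rintro _ ⟨a, ha, rfl⟩
  have habs : ∀ i, |a i| < 1 := fun i => abs_lt.mpr ⟨by linarith [(ha i).1], (ha i).2⟩
  have hbase : 4 * ρ / (1 + ρ) ^ 2 ≤ 4 * ρ / ((1 + ρ) ^ 2 * ∏ i, Real.sqrt (1 - a i ^ 2)) :=
    div_le_div_of_nonneg_left (by positivity)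
      (mul_pos (by positivity) (prod_sqrt_one_sub_sq_pos habs))
      (mul_le_of_le_one_right (by positivity) prod_sqrt_one_sub_sq_le_one)
  exact (Real.rpow_le_rpow (by positivity) hbase (by positivity)).trans (le_max_left _ _)

lemma two_mul_sqrt_div_one_add_le_kappaC {ρ : ℝ} (hρ : 0 ≤ ρ) :
    2 * Real.sqrt ρ / (1 + ρ) ≤ kappaC ρ := by
  refine le_csInf ⟨kappaCk ρ 1, 1, le_rfl, rfl⟩ ?_
  rintro _ ⟨k, hk, rfl⟩
  have hexp : (1 : ℝ) / ((k : ℝ) + 1) ≤ 1 / 2 := by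
    gcongr
    linarith [(Nat.one_le_cast (α := ℝ)).mpr hk]
  rw [two_mul_sqrt_div_one_add_eq_rpow hρ]
  exact (Real.rpow_le_rpow_of_exponent_ge' (by positivity) (four_mul_div_one_add_sq_le_one ρ)
    (by positivity) hexp).trans (rpow_le_kappaCk hρ k)

/-- For every ρ > 1 and k ≥ 1, κ^c_ρ(k) ≥ (4ρ/(1+ρ)²)^{1/(k+1)}; consequently
κ^c_ρ = inf_{k ≥ 1} κ^c_ρ(k) ≥ 2√ρ/(1+ρ) > 0. -/
theorem kappaCk_lower_bound (ρ : ℝ) (hρ : 1 < ρ) :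
    (∀ k : ℕ, 1 ≤ k →
      (4 * ρ / (1 + ρ) ^ 2) ^ ((1 : ℝ) / ((k : ℝ) + 1)) ≤ kappaCk ρ k) ∧
    2 * Real.sqrt ρ / (1 + ρ) ≤ kappaC ρ ∧ 0 < kappaC ρ := by
  have hρ0 : 0 < ρ := by linarith
  have hC := two_mul_sqrt_div_one_add_le_kappaC hρ0.le
  exact ⟨fun k _ => rpow_le_kappaCk hρ0.le k, hC, lt_of_lt_of_le (by positivity) hC⟩
end

section
/- Let ρ > 1 be a real number such that κ^c_ρ(1) ≤ (4ρ/(1+ρ)²)^{1/3}. Then κ^c_ρ(1) ≤ κ^c_ρ(k) for every integer k ≥ 2, and therefore κ^c_ρ = κ^c_ρ(1). -/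
open MeasureTheory Filter

lemma prod_sqrt_one_sub_sq_mem_Ioc {ι : Type*} (s : Finset ι) {a : ι → ℝ}
    (ha : ∀ i ∈ s, 0 ≤ a i ∧ a i < 1) :
    ∏ i ∈ s, Real.sqrt (1 - a i ^ 2) ∈ Set.Ioc 0 1 := by
  refine ⟨Finset.prod_pos fun i hi => Real.sqrt_pos.2 ?_,
    Finset.prod_le_one (fun i _ => Real.sqrt_nonneg _) fun i hi => Real.sqrt_le_one.2 ?_⟩
  · nlinarith [ha i hi]
  · nlinarith [sq_nonneg (a i)]

lemma rpow_inv_succ_le_kappaCk {ρ : ℝ} (hρ : 0 < ρ) (k : ℕ) :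
    (4 * ρ / (1 + ρ) ^ 2) ^ ((1 : ℝ) / ((k : ℝ) + 1)) ≤ kappaCk ρ k := by
  refine le_csInf ⟨_, Set.mem_image_of_mem _ (x := 0) fun _ => ⟨le_rfl, one_pos⟩⟩ ?_
  rintro _ ⟨a, ha, rfl⟩
  obtain ⟨hP0, hP1⟩ := prod_sqrt_one_sub_sq_mem_Ioc Finset.univ (fun i _ => ha i)
  have hbase : 4 * ρ / (1 + ρ) ^ 2 ≤ 4 * ρ / ((1 + ρ) ^ 2 * ∏ i, Real.sqrt (1 - a i ^ 2)) :=
    div_le_div_of_nonneg_left (by positivity) (mul_pos (by positivity) hP0)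
      (mul_le_of_le_one_right (by positivity) hP1)
  exact (Real.rpow_le_rpow (by positivity) hbase (by positivity)).trans (le_max_left _ _)

lemma rpow_one_third_le_kappaCk {ρ : ℝ} (hρ : 0 < ρ) {k : ℕ} (hk : 2 ≤ k) :
    (4 * ρ / (1 + ρ) ^ 2) ^ ((1 : ℝ) / 3) ≤ kappaCk ρ k := by
  refine le_trans ?_ (rpow_inv_succ_le_kappaCk hρ k)
  have hk' : (2 : ℝ) ≤ k := by exact_mod_cast hk
  exact Real.rpow_le_rpow_of_exponent_ge' (by positivity) (four_mul_div_one_add_sq_le_one ρ)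
    (by positivity) (one_div_le_one_div_of_le (by norm_num) (by linarith))

lemma kappaC_eq_kappaCk_one_of_le {ρ : ℝ} (h : ∀ k : ℕ, 2 ≤ k → kappaCk ρ 1 ≤ kappaCk ρ k) :
    kappaC ρ = kappaCk ρ 1 := by
  refine IsLeast.csInf_eq ⟨⟨1, le_rfl, rfl⟩, ?_⟩
  rintro _ ⟨k, hk, rfl⟩
  rcases hk.eq_or_lt with rfl | hk
  · exact le_rfl
  · exact h k hk

/-- If κ^c_ρ(1) ≤ (4ρ/(1+ρ)²)^{1/3}, then κ^c_ρ(1) ≤ κ^c_ρ(k) for every k ≥ 2 and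
therefore κ^c_ρ = κ^c_ρ(1). -/
theorem kappaC_eq_kappaCk_one (ρ : ℝ) (hρ : 1 < ρ)
    (h : kappaCk ρ 1 ≤ (4 * ρ / (1 + ρ) ^ 2) ^ ((1 : ℝ) / 3)) :
    (∀ k : ℕ, 2 ≤ k → kappaCk ρ 1 ≤ kappaCk ρ k) ∧ kappaC ρ = kappaCk ρ 1 := by
  have hle : ∀ k : ℕ, 2 ≤ k → kappaCk ρ 1 ≤ kappaCk ρ k := fun k hk =>
    h.trans (rpow_one_third_le_kappaCk (by linarith) hk)
  exact ⟨hle, kappaC_eq_kappaCk_one_of_le hle⟩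
end

section
/- Fix a real ρ > 1, an integer k ≥ 1, and a real κ with κ^c_ρ(k) < κ < 1. Then there exist reals a_2,…,a_{k+1} ∈ [0,1) such that 1 < κ^{k+1} · ((1+ρ)²/(4ρ)) · ∏_{i=2}^{k+1} √(1−a_i²) < κ · D(a_2,…,a_{k+1}) / (2ρ). -/
open MeasureTheory Filter

/-!
Pick `a` witnessing `kappaCk ρ k < κ`. Both displayed quantities then exceed `1`, but the
product term may exceed the `D` term. Raising one coordinate of `a` scales its factor
`√(1 - a_i²)` down by any prescribed ratio in `(0, 1]`, so the product term can be lowered to any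
value in `(1, κ D(a) / (2ρ))`, while `D` only increases, since each `d_i` is monotone in `a_i`.
-/

lemma rIdx_pos {ρ : ℝ} (hρ : 0 < 1 + ρ) (k i : ℕ) : 0 < rIdx ρ k i := by
  unfold rIdx
  split_ifs <;> linarith

section dSeq

variable {ρ : ℝ} {k : ℕ}

lemma dSeq_pos (hρ : 0 < 1 + ρ) {a : Fin k → ℝ} (ha : 0 ≤ a) (j : ℕ) : 0 < dSeq ρ k a j := by
  induction j with
  | zero => exact hρ
  | succ j ih =>
    have hr := rIdx_pos hρ k (j + 2)
    have hα : 0 ≤ (if h : j < k then a ⟨j, h⟩ else 0) := by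
      split_ifs
      exacts [ha _, le_rfl]
    rw [dSeq, Real.sqrt_pos]
    positivity

lemma dSeq_le_dSeq (hρ : 0 < 1 + ρ) {a b : Fin k → ℝ} (ha : 0 ≤ a) (hab : a ≤ b) (j : ℕ) :
    dSeq ρ k a j ≤ dSeq ρ k b j := by
  induction j with
  | zero => exact le_rfl
  | succ j ih =>
    have hr := rIdx_pos hρ k (j + 2)
    have hd := dSeq_pos hρ ha j
    have hα : 0 ≤ (if h : j < k then a ⟨j, h⟩ else 0) := by
      split_ifs
      exacts [ha _, le_rfl]
    have hαβ : (if h : j < k then a ⟨j, h⟩ else 0) ≤ (if h : j < k then b ⟨j, h⟩ else 0) := by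
      split_ifs
      exacts [hab _, le_rfl]
    rw [dSeq, dSeq]
    gcongr
    exact mul_nonneg (by positivity) (hα.trans hαβ)

end dSeq

lemma exists_lt_of_kappaCk_lt {ρ κ : ℝ} {k : ℕ} (h : kappaCk ρ k < κ) :
    ∃ a : Fin k → ℝ, (∀ i, 0 ≤ a i ∧ a i < 1) ∧
      (4 * ρ / ((1 + ρ) ^ 2 * ∏ i, √(1 - a i ^ 2))) ^ ((1 : ℝ) / ((k : ℝ) + 1)) < κ ∧
      2 * ρ / Dfun ρ k a < κ := by
  unfold kappaCk at h
  obtain ⟨_, ⟨a, ha, rfl⟩, hlt⟩ :=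
    exists_lt_of_csInf_lt (Set.Nonempty.image _ ⟨0, fun _ => ⟨le_rfl, one_pos⟩⟩) h
  exact ⟨a, ha, max_lt_iff.mp hlt⟩

lemma lt_pow_succ_of_rpow_lt {x y : ℝ} {n : ℕ} (hx : 0 ≤ x)
    (h : x ^ ((1 : ℝ) / ((n : ℝ) + 1)) < y) : x < y ^ (n + 1) := by
  have hy : 0 ≤ y := (Real.rpow_nonneg hx _).trans h.le
  rw [one_div, Real.rpow_inv_lt_iff_of_pos hx hy (by positivity)] at h
  exact_mod_cast h

lemma exists_le_sqrt_one_sub_sq_eq_mul {a μ : ℝ} (ha₀ : 0 ≤ a) (ha₁ : a < 1) (hμ₀ : 0 < μ)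
    (hμ₁ : μ ≤ 1) : ∃ t, a ≤ t ∧ t < 1 ∧ √(1 - t ^ 2) = μ * √(1 - a ^ 2) := by
  have hs : 0 < 1 - a ^ 2 := by nlinarith
  have hμs : μ ^ 2 * (1 - a ^ 2) ≤ 1 - a ^ 2 :=
    mul_le_of_le_one_left hs.le (pow_le_one₀ hμ₀.le hμ₁)
  have hμs₀ : 0 < μ ^ 2 * (1 - a ^ 2) := by positivity
  refine ⟨√(1 - μ ^ 2 * (1 - a ^ 2)), Real.le_sqrt_of_sq_le (by linarith), ?_, ?_⟩
  · rw [Real.sqrt_lt' one_pos]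
    linarith
  · rw [Real.sq_sqrt (by nlinarith), sub_sub_cancel, Real.sqrt_mul' _ hs.le,
      Real.sqrt_sq hμ₀.le]

lemma exists_le_prod_sqrt_one_sub_sq_eq_mul {ι : Type*} [Fintype ι] [Nonempty ι] {a : ι → ℝ}
    (ha : ∀ i, 0 ≤ a i ∧ a i < 1) {μ : ℝ} (hμ₀ : 0 < μ) (hμ₁ : μ ≤ 1) :
    ∃ b : ι → ℝ, a ≤ b ∧ (∀ i, 0 ≤ b i ∧ b i < 1) ∧
      ∏ i, √(1 - b i ^ 2) = μ * ∏ i, √(1 - a i ^ 2) := by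
  classical
  obtain ⟨i₀⟩ := ‹Nonempty ι›
  obtain ⟨t, hat, ht, hts⟩ := exists_le_sqrt_one_sub_sq_eq_mul (ha i₀).1 (ha i₀).2 hμ₀ hμ₁
  have hab : a ≤ Function.update a i₀ t := by
    intro i
    rcases eq_or_ne i i₀ with rfl | hi
    · simpa using hat
    · simp [hi]
  refine ⟨Function.update a i₀ t, hab, fun i => ⟨(ha i).1.trans (hab i), ?_⟩, ?_⟩
  · rcases eq_or_ne i i₀ with rfl | hi
    · simpa using ht
    · simpa [hi] using (ha i).2
  · simp_rw [Function.apply_update (fun _ x => √(1 - x ^ 2)) a i₀ t]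
    rw [Finset.prod_update_of_mem (Finset.mem_univ i₀), hts,
      Fintype.prod_eq_mul_prod_compl i₀, mul_assoc]
    rfl

theorem exists_good_a_general (ρ : ℝ) (hρ : 1 < ρ) (k : ℕ) (hk : 1 ≤ k) (κ : ℝ)
    (h1 : kappaCk ρ k < κ) :
    ∃ a : Fin k → ℝ, (∀ i, 0 ≤ a i ∧ a i < 1) ∧
      1 < κ ^ (k + 1) * ((1 + ρ) ^ 2 / (4 * ρ)) * ∏ i, Real.sqrt (1 - a i ^ 2) ∧
      κ ^ (k + 1) * ((1 + ρ) ^ 2 / (4 * ρ)) * ∏ i, Real.sqrt (1 - a i ^ 2) <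
        κ * Dfun ρ k a / (2 * ρ) := by
  have hρ₀ : 0 < ρ := by linarith
  have : Nonempty (Fin k) := ⟨⟨0, hk⟩⟩
  obtain ⟨a, ha, hprod, hD⟩ := exists_lt_of_kappaCk_lt h1
  have hP : 0 < ∏ i, √(1 - a i ^ 2) :=
    Finset.prod_pos fun i _ => Real.sqrt_pos.mpr (by nlinarith [ha i])
  have hκ : 0 < κ := (Real.rpow_pos_of_pos (by positivity) _).trans hprod
  have hM : 1 < κ ^ (k + 1) * ((1 + ρ) ^ 2 / (4 * ρ)) * ∏ i, √(1 - a i ^ 2) := by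
    have := lt_pow_succ_of_rpow_lt (by positivity) hprod
    rw [div_lt_iff₀ (by positivity)] at this
    rw [mul_div_assoc', div_mul_eq_mul_div, one_lt_div (by positivity)]
    linarith
  have hG : 1 < κ * Dfun ρ k a / (2 * ρ) := by
    have hD₀ : 0 < Dfun ρ k a := dSeq_pos (by linarith) (fun i => (ha i).1) k
    rw [div_lt_iff₀ hD₀] at hD
    rwa [one_lt_div (by positivity)]
  set M := κ ^ (k + 1) * ((1 + ρ) ^ 2 / (4 * ρ)) * ∏ i, √(1 - a i ^ 2)
  set G := κ * Dfun ρ k a / (2 * ρ)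
  set c := min M ((1 + G) / 2)
  obtain ⟨b, hab, hb, hPb⟩ := exists_le_prod_sqrt_one_sub_sq_eq_mul ha (μ := c / M)
    (div_pos (by positivity) (by linarith)) (div_le_one_of_le₀ (min_le_left _ _) (by linarith))
  have hMb : κ ^ (k + 1) * ((1 + ρ) ^ 2 / (4 * ρ)) * ∏ i, √(1 - b i ^ 2) = c := by
    rw [hPb, mul_left_comm, div_mul_cancel₀ _ (by linarith)]
  refine ⟨b, hb, ?_, ?_⟩ <;> rw [hMb]
  · exact lt_min hM (by linarith)
  · calc c ≤ (1 + G) / 2 := min_le_right _ _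
      _ < G := by linarith
      _ ≤ κ * Dfun ρ k b / (2 * ρ) := by
        unfold G
        gcongr
        exact dSeq_le_dSeq (by linarith) (fun i => (ha i).1) hab k

/-- For κ^c_ρ(k) < κ < 1 there exist a_2,…,a_{k+1} ∈ [0,1) such that
1 < κ^{k+1}·((1+ρ)²/(4ρ))·∏√(1−a_i²) < κ·D(a_2,…,a_{k+1})/(2ρ). -/
theorem exists_good_a (ρ : ℝ) (hρ : 1 < ρ) (k : ℕ) (hk : 1 ≤ k) (κ : ℝ)
    (h1 : kappaCk ρ k < κ) (h2 : κ < 1) :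
    ∃ a : Fin k → ℝ, (∀ i, 0 ≤ a i ∧ a i < 1) ∧
      1 < κ ^ (k + 1) * ((1 + ρ) ^ 2 / (4 * ρ)) * ∏ i, Real.sqrt (1 - a i ^ 2) ∧
      κ ^ (k + 1) * ((1 + ρ) ^ 2 / (4 * ρ)) * ∏ i, Real.sqrt (1 - a i ^ 2) <
        κ * Dfun ρ k a / (2 * ρ) :=
  exists_good_a_general ρ hρ k hk κ h1
end
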